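/- arXiv:1212.4908 — 2 statements merged into one kernel-verified Lean document; each statement's English description precedes it below -/
import Mathlib

section
/- Let G = (V,E) be a finite graph, q ≥ 1 an integer, β ≥ 0, and let G₀ = (V,E₀) be a spanning subgraph of G with E₀ ⊆ E. Write P_G and P_{G₀} for the transition matrices of the Swendsen–Wang dynamics for the q-state Potts model at inverse temperature β on G and on G₀, respectively. Then for all σ, τ ∈ Ω_P: e^{−β|E∖E₀|} · P_{G₀}(σ,τ) ≤ P_G(σ,τ) ≤ (1 + q(e^β − 1))^{|E∖E₀|} · P_{G₀}(σ,τ). -/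
open Finset

noncomputable section

/-- `ξ` is an eigenvalue of the kernel `P` on the finite state space `Ω`. -/
def IsEigenvalue {Ω : Type*} [Fintype Ω] (P : Ω → Ω → ℝ) (ξ : ℝ) : Prop :=
  ∃ f : Ω → ℝ, f ≠ 0 ∧ ∀ x, (∑ y, P x y * f y) = ξ * f x

/-- The (absolute) spectral gap: `1` minus the largest absolute value of an
eigenvalue different from `1`. -/
def spectralGap {Ω : Type*} [Fintype Ω] (P : Ω → Ω → ℝ) : ℝ :=
  1 - sSup {r : ℝ | ∃ ξ : ℝ, IsEigenvalue P ξ ∧ ξ ≠ 1 ∧ r = |ξ|}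

variable {V E : Type*}

/-- The graph on the vertex set `V` induced by the edges in `A` (a multigraph
`(V, E)` is described by the map `ends` sending an edge to its two endpoints). -/
def subGraph (ends : E → V × V) (A : Finset E) : SimpleGraph V :=
  SimpleGraph.fromRel fun a b => ∃ e ∈ A, ends e = (a, b) ∨ ends e = (b, a)

/-- `c(A)`: the number of connected components of the spanning subgraph `(V, A)`. -/
def compCount (ends : E → V × V) (A : Finset E) : ℕ :=
  Nat.card (subGraph ends A).ConnectedComponent

/-- The endpoints of the edge `e` are connected in the spanning subgraph `(V, A)`. -/
def connectedIn (ends : E → V × V) (A : Finset E) (e : E) : Prop :=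
  (subGraph ends A).Reachable (ends e).1 (ends e).2

/-- The degree of the vertex `v` in the multigraph `(V, E)`. -/
def degree [Fintype E] [DecidableEq V] (ends : E → V × V) (v : V) : ℕ :=
  (univ.filter fun e => (ends e).1 = v ∨ (ends e).2 = v).card

/-- `E(σ)`: the set of edges whose endpoints receive the same color in `σ`. -/
def agreeSet [Fintype E] {q : ℕ} (ends : E → V × V) (σ : V → Fin q) : Finset E :=
  univ.filter fun e => σ (ends e).1 = σ (ends e).2

/-- Unnormalized Potts weight `e^{β |E(σ)|}`. -/
def pottsWeight [Fintype E] (ends : E → V × V) (q : ℕ) (β : ℝ) (σ : V → Fin q) : ℝ :=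
  Real.exp (β * (agreeSet ends σ).card)

/-- The `q`-state Potts measure on `G` at inverse temperature `β`. -/
def pottsPi [Fintype V] [DecidableEq V] [Fintype E] (ends : E → V × V) (q : ℕ) (β : ℝ)
    (σ : V → Fin q) : ℝ :=
  pottsWeight ends q β σ / ∑ τ : V → Fin q, pottsWeight ends q β τ

/-- Transition matrix of the heat-bath (Glauber) dynamics for the Potts model. -/
def PHB [Fintype V] [DecidableEq V] [Fintype E] (ends : E → V × V) (q : ℕ) (β : ℝ)
    (σ τ : V → Fin q) : ℝ :=
  (Fintype.card V : ℝ)⁻¹ * ∑ v : V,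
    (pottsPi ends q β τ / ∑ l : Fin q, pottsPi ends q β (Function.update σ v l)) *
      (if ∃ k : Fin q, τ = Function.update σ v k then 1 else 0)

/-- Transition matrix of the Swendsen–Wang dynamics for the Potts model,
with `p = 1 - e^{-β}`. -/
def PSW [Fintype V] [Fintype E] [DecidableEq E] (ends : E → V × V) (q : ℕ) (β : ℝ)
    (σ τ : V → Fin q) : ℝ :=
  ∑ A ∈ (agreeSet ends σ ∩ agreeSet ends τ).powerset,
    (1 - Real.exp (-β)) ^ A.card * (Real.exp (-β)) ^ ((agreeSet ends σ).card - A.card) *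
      ((q : ℝ) ^ compCount ends A)⁻¹

/-!
A bond set `A ⊆ E(σ) ∩ E(τ)` of the Swendsen–Wang sum on `G` splits as `A₀ = A ∩ E₀` and
`A₁ = A \ E₀`. Deleting the bonds of `A₁` raises the number of components by at most `|A₁|`, so
the weight of `A` is at most the `G₀`-weight of `A₀` times `(pq)^{|A₁|}`; summing over `A₁`
gives the factor `(1 + pq)^{|E(σ) ∩ E(τ) \ E₀|}`, and `p = e^{-β}(e^β - 1) ≤ e^β - 1`.
Conversely the bond sets inside `E₀` occur in both sums, and their weights differ only by the
factor `(1 - p)^{|E(σ) \ E₀|} ≥ e^{-β|E \ E₀|}`.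
-/

namespace SimpleGraph

variable {V : Type*} {G : SimpleGraph V} {u v x y : V}

lemma Reachable.of_sup_edge (h : (G ⊔ edge u v).Reachable x y) :
    G.Reachable x y ∨ (G.Reachable x u ∧ G.Reachable v y) ∨
      (G.Reachable x v ∧ G.Reachable u y) := by
  obtain ⟨w⟩ := h
  induction w with
  | nil => exact Or.inl .rfl
  | @cons x z y hxz _ ih =>
    rw [sup_adj, edge_adj] at hxz
    rcases hxz with hxz | ⟨⟨rfl, rfl⟩ | ⟨rfl, rfl⟩, -⟩
    · have hxz := hxz.reachable
      grind [Reachable.trans]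
    · grind [Reachable.refl]
    · grind [Reachable.refl]

theorem card_connectedComponent_le_card_sup_edge_add_one [Finite V] (G : SimpleGraph V)
    (u v : V) :
    Nat.card G.ConnectedComponent ≤ Nat.card (G ⊔ edge u v).ConnectedComponent + 1 := by
  classical
  let f : G.ConnectedComponent → Option (G ⊔ edge u v).ConnectedComponent := fun c =>
    if c = G.connectedComponentMk v then none else some (c.map (Hom.ofLE le_sup_left))
  have hf : Function.Injective f := by
    intro c d hcd
    by_cases hc : c = G.connectedComponentMk v <;> by_cases hd : d = G.connectedComponentMk v
    all_goals simp only [f, hc, hd, reduceIte, reduceCtorEq, Option.some_inj] at hcd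
    · rw [hc, hd]
    induction c, d using ConnectedComponent.ind₂ with
    | h x y =>
      simp only [ConnectedComponent.map_mk, ConnectedComponent.eq] at hcd hc hd ⊢
      rcases hcd.of_sup_edge with hxy | ⟨-, hvy⟩ | ⟨hxv, -⟩
      exacts [hxy, absurd hvy.symm hd, absurd hxv hc]
  simpa [Finite.card_option] using Nat.card_le_card_of_injective f hf

end SimpleGraph

open SimpleGraph

lemma subGraph_insert [DecidableEq E] (ends : E → V × V) (A : Finset E) (e : E) :
    subGraph ends (insert e A) = subGraph ends A ⊔ edge (ends e).1 (ends e).2 := by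
  ext a b
  simp only [subGraph, sup_adj, fromRel_adj, edge_adj, mem_insert]
  grind

lemma subGraph_map {E' : Type*} (ends : E → V × V) (f : E' ↪ E) (A : Finset E') :
    subGraph ends (A.map f) = subGraph (fun e => ends (f e)) A := by
  ext a b
  simp [subGraph]

lemma compCount_map {E' : Type*} (ends : E → V × V) (f : E' ↪ E) (A : Finset E') :
    compCount ends (A.map f) = compCount (fun e => ends (f e)) A := by
  rw [compCount, compCount, subGraph_map]

lemma compCount_le_compCount_insert_add_one [Finite V] [DecidableEq E] (ends : E → V × V)
    (A : Finset E) (e : E) : compCount ends A ≤ compCount ends (insert e A) + 1 := by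
  rw [compCount, compCount, subGraph_insert]
  exact card_connectedComponent_le_card_sup_edge_add_one _ _ _

lemma compCount_le_compCount_union_add_card [Finite V] [DecidableEq E] (ends : E → V × V)
    (A B : Finset E) : compCount ends A ≤ compCount ends (A ∪ B) + #B := by
  induction B using Finset.induction with
  | empty => simp
  | @insert e B he ih =>
    have := compCount_le_compCount_insert_add_one ends (A ∪ B) e
    rw [union_insert, card_insert_of_notMem he]
    omega

lemma Finset.sum_powerset_map {α β M : Type*} [AddCommMonoid M] (f : α ↪ β) (s : Finset α)
    (g : Finset β → M) : ∑ B ∈ (s.map f).powerset, g B = ∑ A ∈ s.powerset, g (A.map f) := by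
  classical
  simp only [map_eq_image]
  rw [powerset_image, sum_image fun A _ B _ h => image_injective f.injective h]

lemma Finset.sum_powerset_union {α M : Type*} [DecidableEq α] [AddCommMonoid M]
    {s t : Finset α} (hst : Disjoint s t) (f : Finset α → M) :
    ∑ C ∈ (s ∪ t).powerset, f C = ∑ A ∈ s.powerset, ∑ B ∈ t.powerset, f (A ∪ B) := by
  induction t using Finset.induction generalizing f with
  | empty => simp
  | @insert a t hat ih =>
    rw [disjoint_insert_right] at hst
    have has : a ∉ s ∪ t := by simp [hst.1, hat]
    simp only [union_insert, sum_powerset_insert has, sum_powerset_insert hat, sum_add_distrib,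
      ih hst.2]

lemma Real.one_sub_exp_neg_nonneg {x : ℝ} (hx : 0 ≤ x) : 0 ≤ 1 - exp (-x) :=
  sub_nonneg.2 (exp_le_one_iff.2 (neg_nonpos.2 hx))

lemma Real.one_sub_exp_neg_le_exp_sub_one {x : ℝ} (hx : 0 ≤ x) : 1 - exp (-x) ≤ exp x - 1 := by
  have h : 1 - exp (-x) = exp (-x) * (exp x - 1) := by
    rw [mul_sub, ← exp_add, neg_add_cancel, exp_zero, mul_one]
  rw [h]
  exact mul_le_of_le_one_left (by linarith [add_one_le_exp x]) (exp_le_one_iff.2 (by linarith))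

section SwendsenWang

variable {q : ℕ} {β : ℝ}

/-- The summand of `PSW` at the bond set `A`, with `m` in the role of `|E(σ)|`. -/
def swWeight (ends : E → V × V) (q : ℕ) (β : ℝ) (m : ℕ) (A : Finset E) : ℝ :=
  (1 - Real.exp (-β)) ^ #A * Real.exp (-β) ^ (m - #A) * ((q : ℝ) ^ compCount ends A)⁻¹

lemma swWeight_nonneg (ends : E → V × V) (hβ : 0 ≤ β) (m : ℕ) (A : Finset E) :
    0 ≤ swWeight ends q β m A := by
  have := Real.one_sub_exp_neg_nonneg hβ
  unfold swWeight
  positivity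

lemma PSW_nonneg [Fintype V] [Fintype E] [DecidableEq E] (ends : E → V × V) (hβ : 0 ≤ β)
    (σ τ : V → Fin q) : 0 ≤ PSW ends q β σ τ :=
  sum_nonneg fun A _ => swWeight_nonneg ends hβ _ A

lemma exp_neg_pow_mul_swWeight_le (ends : E → V × V) (hβ : 0 ≤ β) {m₀ m k : ℕ}
    (hm : m ≤ m₀ + k) (A : Finset E) :
    Real.exp (-β) ^ k * swWeight ends q β m₀ A ≤ swWeight ends q β m A := by
  have hp := Real.one_sub_exp_neg_nonneg hβ
  have hexp : Real.exp (-β) ^ k * Real.exp (-β) ^ (m₀ - #A) ≤ Real.exp (-β) ^ (m - #A) := by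
    rw [← pow_add]
    exact pow_le_pow_of_le_one (Real.exp_pos _).le (Real.exp_le_one_iff.2 (by linarith))
      (by omega)
  calc Real.exp (-β) ^ k * swWeight ends q β m₀ A
      = (1 - Real.exp (-β)) ^ #A * (Real.exp (-β) ^ k * Real.exp (-β) ^ (m₀ - #A)) *
          ((q : ℝ) ^ compCount ends A)⁻¹ := by unfold swWeight; ring
    _ ≤ swWeight ends q β m A := by unfold swWeight; gcongr

lemma swWeight_union_le [Finite V] [DecidableEq E] (ends : E → V × V) (hq : 1 ≤ q)
    (hβ : 0 ≤ β) {m₀ m : ℕ} {A B : Finset E} (hAB : Disjoint A B) (hm : m₀ + #B ≤ m) :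
    swWeight ends q β m (A ∪ B) ≤ swWeight ends q β m₀ A * ((1 - Real.exp (-β)) * q) ^ #B := by
  have hp := Real.one_sub_exp_neg_nonneg hβ
  have hq' : (1 : ℝ) ≤ q := by exact_mod_cast hq
  have hexp : Real.exp (-β) ^ (m - #(A ∪ B)) ≤ Real.exp (-β) ^ (m₀ - #A) := by
    rw [card_union_of_disjoint hAB]
    exact pow_le_pow_of_le_one (Real.exp_pos _).le (Real.exp_le_one_iff.2 (by linarith))
      (by omega)
  have hcomp : ((q : ℝ) ^ compCount ends (A ∪ B))⁻¹ ≤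
      (q : ℝ) ^ #B * ((q : ℝ) ^ compCount ends A)⁻¹ := by
    calc ((q : ℝ) ^ compCount ends (A ∪ B))⁻¹
        = (q : ℝ) ^ #B * ((q : ℝ) ^ (compCount ends (A ∪ B) + #B))⁻¹ := by
          rw [pow_add]; field_simp
      _ ≤ (q : ℝ) ^ #B * ((q : ℝ) ^ compCount ends A)⁻¹ := by
          gcongr
          exact compCount_le_compCount_union_add_card ends A B
  calc swWeight ends q β m (A ∪ B)
      = (1 - Real.exp (-β)) ^ #A * (1 - Real.exp (-β)) ^ #B * Real.exp (-β) ^ (m - #(A ∪ B)) *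
          ((q : ℝ) ^ compCount ends (A ∪ B))⁻¹ := by
        rw [swWeight, card_union_of_disjoint hAB, pow_add]
    _ ≤ (1 - Real.exp (-β)) ^ #A * (1 - Real.exp (-β)) ^ #B * Real.exp (-β) ^ (m₀ - #A) *
          ((q : ℝ) ^ #B * ((q : ℝ) ^ compCount ends A)⁻¹) := by gcongr
    _ = swWeight ends q β m₀ A * ((1 - Real.exp (-β)) * q) ^ #B := by
        rw [swWeight, mul_pow]; ring

lemma map_agreeSet_subtype [Fintype E] [DecidableEq E] (ends : E → V × V) (E₀ : Finset E)
    (σ : V → Fin q) :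
    (agreeSet (fun e : {e : E // e ∈ E₀} => ends e.val) σ).map (Function.Embedding.subtype _) =
      agreeSet ends σ ∩ E₀ := by
  ext e
  simp [agreeSet, and_comm]

lemma PSW_subtype [Fintype V] [Fintype E] [DecidableEq E] (ends : E → V × V) (E₀ : Finset E)
    (σ τ : V → Fin q) :
    PSW (fun e : {e : E // e ∈ E₀} => ends e.val) q β σ τ =
      ∑ A ∈ (agreeSet ends σ ∩ agreeSet ends τ ∩ E₀).powerset,
        swWeight ends q β #(agreeSet ends σ ∩ E₀) A := by
  rw [inter_inter_distrib_right, ← map_agreeSet_subtype ends E₀ σ,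
    ← map_agreeSet_subtype ends E₀ τ, ← map_inter, sum_powerset_map, card_map]
  refine sum_congr rfl fun A _ => ?_
  rw [swWeight, card_map, compCount_map]
  rfl

theorem exp_neg_pow_mul_PSW_subtype_le [Fintype V] [Fintype E] [DecidableEq E]
    (ends : E → V × V) (E₀ : Finset E) (hβ : 0 ≤ β) (σ τ : V → Fin q) :
    Real.exp (-β) ^ #E₀ᶜ * PSW (fun e : {e : E // e ∈ E₀} => ends e.val) q β σ τ ≤
      PSW ends q β σ τ := by
  have hm : #(agreeSet ends σ) ≤ #(agreeSet ends σ ∩ E₀) + #E₀ᶜ := by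
    rw [← card_inter_add_card_sdiff (agreeSet ends σ) E₀, sdiff_eq_inter_compl]
    exact Nat.add_le_add_left (card_le_card inter_subset_right) _
  rw [PSW_subtype, mul_sum]
  calc ∑ A ∈ (agreeSet ends σ ∩ agreeSet ends τ ∩ E₀).powerset,
        Real.exp (-β) ^ #E₀ᶜ * swWeight ends q β #(agreeSet ends σ ∩ E₀) A
      ≤ ∑ A ∈ (agreeSet ends σ ∩ agreeSet ends τ ∩ E₀).powerset,
          swWeight ends q β #(agreeSet ends σ) A :=
        sum_le_sum fun A _ => exp_neg_pow_mul_swWeight_le ends hβ hm A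
    _ ≤ ∑ A ∈ (agreeSet ends σ ∩ agreeSet ends τ).powerset,
          swWeight ends q β #(agreeSet ends σ) A :=
        sum_le_sum_of_subset_of_nonneg (powerset_mono.2 inter_subset_left)
          fun A _ _ => swWeight_nonneg ends hβ _ A
    _ = PSW ends q β σ τ := rfl

theorem PSW_le_mul_PSW_subtype [Fintype V] [Fintype E] [DecidableEq E] (ends : E → V × V)
    (E₀ : Finset E) (hq : 1 ≤ q) (hβ : 0 ≤ β) (σ τ : V → Fin q) :
    PSW ends q β σ τ ≤
      ((1 - Real.exp (-β)) * q + 1) ^ #((agreeSet ends σ ∩ agreeSet ends τ) \ E₀) *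
        PSW (fun e : {e : E // e ∈ E₀} => ends e.val) q β σ τ := by
  set S := agreeSet ends σ ∩ agreeSet ends τ
  have hm : ∀ B ∈ (S \ E₀).powerset, #(agreeSet ends σ ∩ E₀) + #B ≤ #(agreeSet ends σ) := by
    intro B hB
    rw [← card_inter_add_card_sdiff (agreeSet ends σ) E₀]
    exact Nat.add_le_add_left (card_le_card ((mem_powerset.1 hB).trans
      (sdiff_subset_sdiff inter_subset_left subset_rfl))) _
  calc PSW ends q β σ τ
      = ∑ C ∈ (S ∩ E₀ ∪ S \ E₀).powerset, swWeight ends q β #(agreeSet ends σ) C := by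
        rw [union_comm, sdiff_union_inter]; rfl
    _ = ∑ A ∈ (S ∩ E₀).powerset, ∑ B ∈ (S \ E₀).powerset,
          swWeight ends q β #(agreeSet ends σ) (A ∪ B) :=
        sum_powerset_union (disjoint_sdiff_inter S E₀).symm _
    _ ≤ ∑ A ∈ (S ∩ E₀).powerset, ∑ B ∈ (S \ E₀).powerset,
          swWeight ends q β #(agreeSet ends σ ∩ E₀) A * ((1 - Real.exp (-β)) * q) ^ #B :=
        sum_le_sum fun A hA => sum_le_sum fun B hB => swWeight_union_le ends hq hβ
          (disjoint_of_subset_left (mem_powerset.1 hA) (disjoint_of_subset_right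
            (mem_powerset.1 hB) (disjoint_sdiff_inter S E₀).symm)) (hm B hB)
    _ = (∑ A ∈ (S ∩ E₀).powerset, swWeight ends q β #(agreeSet ends σ ∩ E₀) A) *
          ((1 - Real.exp (-β)) * q + 1) ^ #(S \ E₀) := by
        rw [← sum_pow_mul_eq_add_pow, sum_mul_sum]
        simp only [one_pow, mul_one]
    _ = ((1 - Real.exp (-β)) * q + 1) ^ #(S \ E₀) *
          PSW (fun e : {e : E // e ∈ E₀} => ends e.val) q β σ τ := by
        rw [PSW_subtype, mul_comm]

end SwendsenWang

theorem sw_subgraph_comparison_general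
    {V E : Type*} [Fintype V] [Fintype E] [DecidableEq E]
    (ends : E → V × V) (q : ℕ) (hq : 1 ≤ q) (β : ℝ) (hβ : 0 ≤ β)
    (E₀ : Finset E) (σ τ : V → Fin q) :
    (Real.exp (-β)) ^ (E₀ᶜ.card) *
        PSW (fun e : {e : E // e ∈ E₀} => ends e.val) q β σ τ ≤ PSW ends q β σ τ ∧
      PSW ends q β σ τ ≤
        (1 + (q : ℝ) * (Real.exp β - 1)) ^ (E₀ᶜ.card) *
          PSW (fun e : {e : E // e ∈ E₀} => ends e.val) q β σ τ := by
  refine ⟨exp_neg_pow_mul_PSW_subtype_le ends E₀ hβ σ τ,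
    (PSW_le_mul_PSW_subtype ends E₀ hq hβ σ τ).trans ?_⟩
  have hp : 0 ≤ (1 - Real.exp (-β)) * q :=
    mul_nonneg (Real.one_sub_exp_neg_nonneg hβ) q.cast_nonneg
  have hbase : (1 - Real.exp (-β)) * q + 1 ≤ 1 + q * (Real.exp β - 1) := by
    have := mul_le_mul_of_nonneg_left (Real.one_sub_exp_neg_le_exp_sub_one hβ) q.cast_nonneg
    linarith
  have hcard : #((agreeSet ends σ ∩ agreeSet ends τ) \ E₀) ≤ #E₀ᶜ := by
    rw [sdiff_eq_inter_compl]
    exact card_le_card inter_subset_right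
  gcongr ?_ * _
  · exact PSW_nonneg _ hβ σ τ
  calc _ ≤ (1 + q * (Real.exp β - 1)) ^ #((agreeSet ends σ ∩ agreeSet ends τ) \ E₀) :=
        pow_le_pow_left₀ (by linarith) hbase _
    _ ≤ _ := pow_le_pow_right₀ (by linarith) hcard

/-- Comparison of the Swendsen–Wang transition probabilities on
`G = (V,E)` and on a spanning subgraph `G₀ = (V,E₀)`:
`e^{−β|E∖E₀|}·P_{G₀}(σ,τ) ≤ P_G(σ,τ) ≤ (1 + q(e^β − 1))^{|E∖E₀|}·P_{G₀}(σ,τ)`. -/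
theorem sw_subgraph_comparison
    {V E : Type*} [Fintype V] [DecidableEq V] [Fintype E] [DecidableEq E]
    (ends : E → V × V) (q : ℕ) (hq : 1 ≤ q) (β : ℝ) (hβ : 0 ≤ β)
    (E₀ : Finset E) (σ τ : V → Fin q) :
    (Real.exp (-β)) ^ (E₀ᶜ.card) *
        PSW (fun e : {e : E // e ∈ E₀} => ends e.val) q β σ τ ≤ PSW ends q β σ τ ∧
      PSW ends q β σ τ ≤
        (1 + (q : ℝ) * (Real.exp β - 1)) ^ (E₀ᶜ.card) *
          PSW (fun e : {e : E // e ∈ E₀} => ends e.val) q β σ τ :=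
  sw_subgraph_comparison_general ends q hq β hβ E₀ σ τ
end
end

section
/- Let H₁ and H₂ be Hilbert spaces, R : H₂ → H₁ a bounded linear operator with ‖R R*‖ ≤ 1, and T : H₂ → H₂ a bounded self-adjoint positive operator with ‖T‖ ≤ 1. Then for every integer k ≥ 1, ‖R T R*‖^{2k} ≤ ‖R T^k R*‖. -/
/-!
Put `S = R T R*`, a positive operator with `‖S‖ ≤ ‖T‖ ‖R R*‖ ≤ 1`, and fix `f` with `‖f‖ ≤ 1`;
then `g = R* f` also has `‖g‖ ≤ 1`. For a positive contraction, Cauchy–Schwarz for the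
semi-inner product `⟪S ·, ·⟫` gives `‖S f‖² ≤ ⟪S f, f⟫ = ⟪T g, g⟫`. The moments
`a m = ⟪T^m g, g⟫` are nonnegative and log-convex in the two forms `a m ² ≤ a (2m) a 0` and
`a (m+1) ² ≤ a (2m+1) a 1`, and `a 0 = ‖g‖² ≤ 1`; halving `k` then yields `a 1 ^ k ≤ a k`.
Hence `‖S f‖^{2k} ≤ ⟪T^k g, g⟫ = ⟪R T^k R* f, f⟫ ≤ ‖R T^k R*‖`.
-/

open ContinuousLinearMap

theorem pow_le_of_sq_le_mul {a : ℕ → ℝ} (hnonneg : ∀ m, 0 ≤ a m) (ha₀ : a 0 ≤ 1)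
    (heven : ∀ m, a m ^ 2 ≤ a (2 * m) * a 0) (hodd : ∀ m, a (m + 1) ^ 2 ≤ a (2 * m + 1) * a 1)
    {k : ℕ} (hk : k ≠ 0) : a 1 ^ k ≤ a k := by
  induction k using Nat.strong_induction_on with
  | _ k ih =>
  obtain ⟨m, rfl | rfl⟩ := Nat.even_or_odd' k
  · calc a 1 ^ (2 * m) = (a 1 ^ m) ^ 2 := by ring
      _ ≤ a m ^ 2 := pow_le_pow_left₀ (pow_nonneg (hnonneg 1) m) (ih m (by omega) (by omega)) 2
      _ ≤ a (2 * m) * a 0 := heven m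
      _ ≤ a (2 * m) := mul_le_of_le_one_right (hnonneg _) ha₀
  · rcases eq_or_ne m 0 with rfl | hm
    · simp
    rcases (hnonneg 1).eq_or_lt with h₁ | h₁
    · rw [← h₁, zero_pow hk]
      exact hnonneg _
    refine le_of_mul_le_mul_right ?_ h₁
    calc a 1 ^ (2 * m + 1) * a 1 = (a 1 ^ (m + 1)) ^ 2 := by ring
      _ ≤ a (m + 1) ^ 2 :=
        pow_le_pow_left₀ (pow_nonneg (hnonneg 1) _) (ih _ (by omega) (by omega)) 2
      _ ≤ a (2 * m + 1) * a 1 := hodd m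

namespace ContinuousLinearMap

theorem opNorm_pow_le_of_forall_norm_apply_pow_le {𝕜 E F : Type*} [RCLike 𝕜]
    [NormedAddCommGroup E] [NormedSpace 𝕜 E] [NormedAddCommGroup F] [NormedSpace 𝕜 F]
    (A : E →L[𝕜] F) {n : ℕ} (hn : n ≠ 0) {C : ℝ} (h : ∀ x, ‖x‖ ≤ 1 → ‖A x‖ ^ n ≤ C) :
    ‖A‖ ^ n ≤ C := by
  have hC : 0 ≤ C := by simpa [hn] using h 0 (by simp)
  have hn' : (0 : ℝ) < n := by positivity
  have hA : ‖A‖ ≤ C ^ (n⁻¹ : ℝ) := opNorm_le_of_unit_norm (by positivity) fun x hx =>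
    (Real.le_rpow_inv_iff_of_pos (norm_nonneg _) hC hn').2 (by exact_mod_cast h x hx.le)
  calc ‖A‖ ^ n ≤ (C ^ (n⁻¹ : ℝ)) ^ n := by gcongr
    _ = C := Real.rpow_inv_natCast_pow hC hn

theorem norm_comp_comp_adjoint_le {𝕜 E F : Type*} [RCLike 𝕜]
    [NormedAddCommGroup E] [InnerProductSpace 𝕜 E] [CompleteSpace E]
    [NormedAddCommGroup F] [InnerProductSpace 𝕜 F] [CompleteSpace F]
    (R : E →L[𝕜] F) (T : E →L[𝕜] E) : ‖R ∘L T ∘L adjoint R‖ ≤ ‖T‖ * ‖R ∘L adjoint R‖ := by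
  have hRR : ‖R ∘L adjoint R‖ = ‖R‖ * ‖R‖ := by
    simpa using norm_adjoint_comp_self (adjoint R)
  calc ‖R ∘L T ∘L adjoint R‖ ≤ ‖R‖ * (‖T‖ * ‖adjoint R‖) :=
        (opNorm_comp_le _ _).trans (by gcongr; exact opNorm_comp_le _ _)
    _ = ‖T‖ * ‖R ∘L adjoint R‖ := by rw [hRR, LinearIsometryEquiv.norm_map]; ring

section Real

variable {H : Type*} [NormedAddCommGroup H] [InnerProductSpace ℝ H]

theorem real_inner_apply_le_opNorm (A : H →L[ℝ] H) {x : H} (hx : ‖x‖ ≤ 1) :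
    inner ℝ (A x) x ≤ ‖A‖ :=
  calc inner ℝ (A x) x ≤ ‖A x‖ * ‖x‖ := real_inner_le_norm _ _
    _ ≤ ‖A‖ * ‖x‖ * ‖x‖ := by gcongr; exact A.le_opNorm x
    _ ≤ ‖A‖ * 1 * 1 := by gcongr
    _ = ‖A‖ := by ring

variable {T : H →L[ℝ] H}

theorem inner_pow_add_apply (hT : T.IsSymmetric) (m n : ℕ) (x y : H) :
    inner ℝ ((T ^ (m + n)) x) y = inner ℝ ((T ^ n) x) ((T ^ m) y) := by
  rw [pow_add, mul_apply_eq_comp]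
  exact (toLinearMap_pow T m ▸ hT.pow m) _ _

theorem IsPositive.inner_sq_le_mul (hT : T.IsPositive) (x y : H) :
    inner ℝ (T x) y ^ 2 ≤ inner ℝ (T x) x * inner ℝ (T y) y := by
  have hsymm : inner ℝ (T y) x = inner ℝ (T x) y := by
    rw [hT.inner_left_eq_inner_right, real_inner_comm]
  have hquad (t : ℝ) :
      0 ≤ inner ℝ (T y) y * (t * t) + 2 * inner ℝ (T x) y * t + inner ℝ (T x) x := by
    have := hT.inner_nonneg_left (x + t • y)
    simp only [map_add, map_smul, inner_add_left, inner_add_right, real_inner_smul_left,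
      real_inner_smul_right, hsymm] at this
    linarith
  have := discrim_le_zero hquad
  rw [discrim] at this
  linarith

theorem IsPositive.norm_apply_sq_le (hT : T.IsPositive) (x : H) :
    ‖T x‖ ^ 2 ≤ ‖T‖ * inner ℝ (T x) x := by
  rcases (norm_nonneg (T x)).eq_or_lt with h | h
  · rw [← h, sq, zero_mul]
    exact mul_nonneg (norm_nonneg T) (hT.inner_nonneg_left x)
  have hCS := hT.inner_sq_le_mul x (T x)
  rw [real_inner_self_eq_norm_sq] at hCS
  refine le_of_mul_le_mul_right ?_ (pow_pos h 2)
  calc ‖T x‖ ^ 2 * ‖T x‖ ^ 2 ≤ inner ℝ (T x) x * inner ℝ (T (T x)) (T x) := by nlinarith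
    _ ≤ inner ℝ (T x) x * (‖T‖ * ‖T x‖ ^ 2) := by
        gcongr
        · exact hT.inner_nonneg_left x
        · calc inner ℝ (T (T x)) (T x) ≤ ‖T (T x)‖ * ‖T x‖ := real_inner_le_norm _ _
            _ ≤ ‖T‖ * ‖T x‖ * ‖T x‖ := by gcongr; exact T.le_opNorm _
            _ = ‖T‖ * ‖T x‖ ^ 2 := by ring
    _ = ‖T‖ * inner ℝ (T x) x * ‖T x‖ ^ 2 := by ring

theorem IsPositive.inner_apply_pow_le (hT : T.IsPositive) {x : H} (hx : ‖x‖ ≤ 1) {k : ℕ}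
    (hk : k ≠ 0) : inner ℝ (T x) x ^ k ≤ inner ℝ ((T ^ k) x) x := by
  set a : ℕ → ℝ := fun m => inner ℝ ((T ^ m) x) x with ha
  have hsucc (m : ℕ) : (T ^ (m + 1)) x = T ((T ^ m) x) := by rw [pow_succ', mul_apply_eq_comp]
  have heven (m : ℕ) : a (2 * m) = inner ℝ ((T ^ m) x) ((T ^ m) x) := by
    rw [two_mul]
    exact inner_pow_add_apply hT.isSymmetric m m x x
  have hodd (m : ℕ) : a (2 * m + 1) = inner ℝ (T ((T ^ m) x)) ((T ^ m) x) := by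
    rw [show 2 * m + 1 = m + (m + 1) by ring, ← hsucc]
    exact inner_pow_add_apply hT.isSymmetric m (m + 1) x x
  have ha₁ : a 1 = inner ℝ (T x) x := by simp [ha]
  refine ha₁ ▸ pow_le_of_sq_le_mul (fun m => ?_) ?_ (fun m => ?_) (fun m => ?_) hk
  · obtain ⟨p, rfl | rfl⟩ := Nat.even_or_odd' m
    · exact heven p ▸ real_inner_self_nonneg
    · exact hodd p ▸ hT.inner_nonneg_left _
  · simpa [ha, real_inner_self_eq_norm_sq] using hx
  · rw [heven, sq]
    simpa only [ha, pow_zero, one_apply_eq_self] using real_inner_mul_inner_self_le ((T ^ m) x) x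
  · rw [hodd, ha₁]
    simpa only [ha, hsucc] using hT.inner_sq_le_mul ((T ^ m) x) x

end Real

end ContinuousLinearMap

/-- For a bounded operator `R : H₂ → H₁` with `‖R R*‖ ≤ 1` and a
bounded self-adjoint positive operator `T` on `H₂` with `‖T‖ ≤ 1`,
`‖R T R*‖^{2k} ≤ ‖R T^k R*‖` for every integer `k ≥ 1`. -/
theorem norm_RTR_pow_le
    {H₁ H₂ : Type*} [NormedAddCommGroup H₁] [InnerProductSpace ℝ H₁] [CompleteSpace H₁]
    [NormedAddCommGroup H₂] [InnerProductSpace ℝ H₂] [CompleteSpace H₂]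
    (R : H₂ →L[ℝ] H₁) (hR : ‖R ∘L adjoint R‖ ≤ 1) (T : H₂ →L[ℝ] H₂)
    (hT : IsSelfAdjoint T) (hTpos : ∀ g : H₂, 0 ≤ (inner ℝ (T g) g : ℝ)) (hTnorm : ‖T‖ ≤ 1)
    (k : ℕ) (hk : 1 ≤ k) :
    ‖R ∘L T ∘L adjoint R‖ ^ (2 * k) ≤ ‖R ∘L (T ^ k) ∘L adjoint R‖ := by
  have hTp : T.IsPositive := (isPositive_iff' T).2 ⟨hT, hTpos⟩
  have hS := hTp.conj_adjoint R
  have hS₁ : ‖R ∘L T ∘L adjoint R‖ ≤ 1 :=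
    (norm_comp_comp_adjoint_le R T).trans (mul_le_one₀ hTnorm (norm_nonneg _) hR)
  have hR₁ : ‖adjoint R‖ ≤ 1 := by
    rw [← sq_le_one_iff₀ (norm_nonneg _), sq, ← norm_adjoint_comp_self, adjoint_adjoint]
    exact hR
  refine opNorm_pow_le_of_forall_norm_apply_pow_le _ (by omega) fun f hf => ?_
  have hRf : ‖adjoint R f‖ ≤ 1 := (adjoint R).le_of_opNorm_le hR₁ f |>.trans (by simpa using hf)
  calc ‖(R ∘L T ∘L adjoint R) f‖ ^ (2 * k) = (‖(R ∘L T ∘L adjoint R) f‖ ^ 2) ^ k := pow_mul ..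
    _ ≤ inner ℝ ((R ∘L T ∘L adjoint R) f) f ^ k := by
        gcongr
        exact (hS.norm_apply_sq_le f).trans (mul_le_of_le_one_left (hS.inner_nonneg_left f) hS₁)
    _ = inner ℝ (T (adjoint R f)) (adjoint R f) ^ k :=
        congrArg (· ^ k) (adjoint_inner_right R _ f).symm
    _ ≤ inner ℝ ((T ^ k) (adjoint R f)) (adjoint R f) := hTp.inner_apply_pow_le hRf (by omega)
    _ = inner ℝ ((R ∘L (T ^ k) ∘L adjoint R) f) f := adjoint_inner_right R _ f
    _ ≤ ‖R ∘L (T ^ k) ∘L adjoint R‖ := real_inner_apply_le_opNorm _ hf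
end
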